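/- arXiv:1204.1484 — 2 statements merged into one kernel-verified Lean document; each statement's English description precedes it below -/
import Mathlib

section
/- If k : (a,b) → ℝ is a positive twice differentiable function satisfying k''k = (7/4)(k')² − 4k⁴, then the quantity ((k')² + 16k⁴)·k^(−7/2) is constant on (a,b). -/
/-!
Along a solution of `k'' k = α k'² + β k⁴`, the derivative of `(k'² + c k⁴) kᵖ` factors as
`k' kᵖ⁻¹ ((2α + p) k'² + (2β + (4 + p) c) k⁴)`, which vanishes for `p = -2α` and
`(4 + p) c = -2β`. For `α = 7/4`, `β = -4` this gives `p = -7/2`, `c = 16`, and a function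
with zero derivative on an interval is constant.
-/

noncomputable def firstIntegral (c p : ℝ) (k : ℝ → ℝ) (u : ℝ) : ℝ :=
  (deriv k u ^ 2 + c * k u ^ 4) * k u ^ p

theorem hasDerivAt_firstIntegral {k : ℝ → ℝ} {u α β c p : ℝ} (hk : 0 < k u)
    (hk' : DifferentiableAt ℝ k u) (hk'' : DifferentiableAt ℝ (deriv k) u)
    (hode : deriv (deriv k) u * k u = α * deriv k u ^ 2 + β * k u ^ 4)
    (hp : p = -2 * α) (hc : (4 + p) * c = -2 * β) :
    HasDerivAt (firstIntegral c p k) 0 u := by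
  have hsum : HasDerivAt (fun u => deriv k u ^ 2 + c * k u ^ 4)
      (2 * deriv k u ^ 1 * deriv (deriv k) u + c * (4 * k u ^ 3 * deriv k u)) u :=
    (hk''.hasDerivAt.pow 2).add ((hk'.hasDerivAt.pow 4).const_mul c)
  have hpow := hk'.hasDerivAt.rpow_const (p := p) (Or.inl hk.ne')
  refine (hsum.mul hpow).congr_deriv ?_
  have hsplit : k u ^ p = k u * k u ^ (p - 1) := by
    rw [Real.rpow_sub_one hk.ne']
    field_simp
  rw [hsplit]
  linear_combination (2 * deriv k u * k u ^ (p - 1)) * hode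
    + (deriv k u ^ 3 * k u ^ (p - 1)) * hp + (deriv k u * k u ^ 4 * k u ^ (p - 1)) * hc

/-- If k > 0 satisfies k''k = (7/4)(k')² − 4k⁴, then
((k')² + 16k⁴)·k^(−7/2) is constant on (a,b). -/
theorem stmt_6 (a b : ℝ) (k : ℝ → ℝ)
    (hpos : ∀ u ∈ Set.Ioo a b, 0 < k u)
    (hdiff : ∀ u ∈ Set.Ioo a b, DifferentiableAt ℝ k u ∧ DifferentiableAt ℝ (deriv k) u)
    (hode : ∀ u ∈ Set.Ioo a b, deriv (deriv k) u * k u =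
      (7 / 4) * (deriv k u) ^ 2 - 4 * (k u) ^ 4) :
    ∃ C : ℝ, ∀ u ∈ Set.Ioo a b,
      ((deriv k u) ^ 2 + 16 * (k u) ^ 4) * (k u) ^ (-(7 : ℝ) / 2) = C := by
  have hF : ∀ u ∈ Set.Ioo a b, HasDerivAt (firstIntegral 16 (-7 / 2) k) 0 u := fun u hu =>
    hasDerivAt_firstIntegral (α := 7 / 4) (β := -4) (hpos u hu) (hdiff u hu).1 (hdiff u hu).2
      (by rw [hode u hu]; ring) (by norm_num) (by norm_num)
  exact isOpen_Ioo.exists_is_const_of_deriv_eq_zero isPreconnected_Ioo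
    (fun u hu => (hF u hu).differentiableAt.differentiableWithinAt) fun u hu => (hF u hu).deriv
end

section
/- Let f : (a,b) → ℝ be positive and twice differentiable satisfying f·f'' = (7/4)(f')² − (4/3)f² − f⁴ (the case c = −1), and suppose 9(f')²/(16f²) + 9f²/4 − 1 > 0 on (a,b). Define κ₂ := √(9(f')²/(16f²) + 9f²/4 − 1). Then 4κ₂'/κ₂ = 3f'/f. -/
/-!
Write `W = κ₂²`. Differentiating `W = 9 f'²/(16 f²) + 9 f²/4 - 1` and eliminating `f''` with the
ODE shows that `W` satisfies the linear equation `W' = (3/2)(f'/f) W`; halving the logarithmic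
derivative for the square root gives `κ₂'/κ₂ = (3/4) f'/f`.
-/

open Real

lemma logDeriv_sqrt {W : ℝ → ℝ} {u : ℝ} (hW : 0 < W u) (hd : DifferentiableAt ℝ W u) :
    logDeriv (fun x => √(W x)) u = logDeriv W u / 2 := by
  have hsq : √(W u) ^ 2 = W u := sq_sqrt hW.le
  have hpos : 0 < √(W u) := sqrt_pos.mpr hW
  rw [logDeriv_apply, logDeriv_apply, (hd.hasDerivAt.sqrt hW.ne').deriv]
  field_simp
  rw [hsq]

/-- The paper's `W = κ₂²`. -/
noncomputable def kappaSq (f : ℝ → ℝ) (u : ℝ) : ℝ :=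
  9 * (deriv f u) ^ 2 / (16 * (f u) ^ 2) + 9 * (f u) ^ 2 / 4 - 1

lemma hasDerivAt_kappaSq {f : ℝ → ℝ} {u : ℝ} (hf : f u ≠ 0) (hd : DifferentiableAt ℝ f u)
    (hd' : DifferentiableAt ℝ (deriv f) u) :
    HasDerivAt (kappaSq f)
      (9 * deriv f u * (f u * deriv (deriv f) u - deriv f u ^ 2) / (8 * f u ^ 3)
        + 9 * f u * deriv f u / 2) u := by
  refine (((((hd'.hasDerivAt.fun_pow 2).const_mul 9).fun_div
    ((hd.hasDerivAt.fun_pow 2).const_mul 16) (by positivity)).add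
    (((hd.hasDerivAt.fun_pow 2).const_mul 9).div_const 4)).sub_const 1).congr_deriv ?_
  field_simp
  ring

lemma hasDerivAt_kappaSq_of_ode {f : ℝ → ℝ} {u : ℝ} (hf : f u ≠ 0)
    (hd : DifferentiableAt ℝ f u) (hd' : DifferentiableAt ℝ (deriv f) u)
    (hode : f u * deriv (deriv f) u
      = (7 / 4) * (deriv f u) ^ 2 - (4 / 3) * (f u) ^ 2 - (f u) ^ 4) :
    HasDerivAt (kappaSq f) (3 / 2 * (deriv f u / f u) * kappaSq f u) u := by
  refine (hasDerivAt_kappaSq hf hd hd').congr_deriv ?_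
  rw [hode, kappaSq]
  field_simp
  ring

/-- If f > 0 satisfies f·f'' = (7/4)(f')² − (4/3)f² − f⁴ (case c = −1) with
W := 9(f')²/(16f²) + 9f²/4 − 1 > 0 and κ₂ := √W, then 4κ₂'/κ₂ = 3f'/f. -/
theorem stmt_19 (a b : ℝ) (f : ℝ → ℝ)
    (hpos : ∀ u ∈ Set.Ioo a b, 0 < f u)
    (hdiff : ∀ u ∈ Set.Ioo a b, DifferentiableAt ℝ f u ∧ DifferentiableAt ℝ (deriv f) u)
    (hode : ∀ u ∈ Set.Ioo a b,
      f u * deriv (deriv f) u = (7 / 4) * (deriv f u) ^ 2 - (4 / 3) * (f u) ^ 2 - (f u) ^ 4)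
    (hW : ∀ u ∈ Set.Ioo a b,
      0 < 9 * (deriv f u) ^ 2 / (16 * (f u) ^ 2) + 9 * (f u) ^ 2 / 4 - 1) :
    ∀ u ∈ Set.Ioo a b,
      4 * deriv (fun x => Real.sqrt (9 * (deriv f x) ^ 2 / (16 * (f x) ^ 2) +
          9 * (f x) ^ 2 / 4 - 1)) u /
        Real.sqrt (9 * (deriv f u) ^ 2 / (16 * (f u) ^ 2) + 9 * (f u) ^ 2 / 4 - 1) =
      3 * deriv f u / f u := by
  intro u hu
  obtain ⟨hd, hd'⟩ := hdiff u hu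
  have hf := (hpos u hu).ne'
  have hκ := hasDerivAt_kappaSq_of_ode hf hd hd' (hode u hu)
  have hκpos : 0 < kappaSq f u := hW u hu
  calc 4 * deriv (fun x => √(kappaSq f x)) u / √(kappaSq f u)
      = 4 * logDeriv (fun x => √(kappaSq f x)) u := mul_div_assoc _ _ _
    _ = 2 * logDeriv (kappaSq f) u := by rw [logDeriv_sqrt hκpos hκ.differentiableAt]; ring
    _ = 3 * deriv f u / f u := by
      rw [logDeriv_apply, hκ.deriv]
      field_simp
end
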